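/- arXiv:1105.1683 — 4 statements merged into one kernel-verified Lean document; each statement's English description precedes it below -/
import Mathlib

section
/- Let G = (V,E) be a finite simple graph and p ∈ [0,1]^V lie in the Shearer set of G. Then every BRF Z in the weak dependency class C_w^G(p) satisfies, for every W ⊆ V, P(Z_v = 1 for all v ∈ W) ≥ Ξ_{G[W]}(p) ≥ 0. -/
open MeasureTheory Finset
open scoped Classical

/-- The critical function Ξ_{G[W]}(p). -/
noncomputable def Xi {V : Type*} (G : SimpleGraph V) (W : Finset V) (p : V → ℝ) : ℝ :=
  ∑ T ∈ W.powerset,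
    if ∀ u ∈ T, ∀ w ∈ T, ¬ G.Adj u w then ∏ v ∈ T, -(1 - p v) else 0

/-- Cylinder event. -/
def cylEvt {V : Type*} (S : Finset V) (s : V → Bool) : Set (V → Bool) :=
  {ω | ∀ v ∈ S, ω v = s v}

def WeakDep {V : Type*} (G : SimpleGraph V) (p : V → ℝ)
    (μ : Measure (V → Bool)) : Prop :=
  IsProbabilityMeasure μ ∧
  ∀ (v : V) (S : Finset V), (∀ w ∈ S, w ≠ v ∧ ¬ G.Adj v w) →
    ∀ s : V → Bool, 0 < (μ (cylEvt S s)).toReal →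
      p v ≤ (μ ({ω | ω v = true} ∩ cylEvt S s)).toReal / (μ (cylEvt S s)).toReal

def StrongDep {V : Type*} (G : SimpleGraph V) (p : V → ℝ)
    (μ : Measure (V → Bool)) : Prop :=
  IsProbabilityMeasure μ ∧
  (∀ v : V, (μ {ω | ω v = true}).toReal = p v) ∧
  ∀ (S₁ S₂ : Finset V), (∀ u ∈ S₁, ∀ w ∈ S₂, u ≠ w ∧ ¬ G.Adj u w) →
    ∀ s₁ s₂ : V → Bool,
      μ (cylEvt S₁ s₁ ∩ cylEvt S₂ s₂) = μ (cylEvt S₁ s₁) * μ (cylEvt S₂ s₂)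

/-- Expectation of f under product field π_c restricted to W. -/
noncomputable def prodExp {V : Type*} (c : V → ℝ) (W : Finset V)
    (f : (W → Bool) → ℝ) : ℝ :=
  ∑ s : W → Bool, (∏ v : W, if s v then c v.1 else 1 - c v.1) * f s

/-- μ stochastically dominates the Bernoulli product field π_c. -/
def DomProd {V : Type*} (μ : Measure (V → Bool)) (c : V → ℝ) : Prop :=
  ∀ (W : Finset V) (f : (W → Bool) → ℝ), Monotone f →
    prodExp c W f ≤ ∫ ω, f (fun v => ω v.1) ∂μ

/-- ν is the Bernoulli product field π_c. -/
def IsProduct {V : Type*} (c : V → ℝ) (μ : Measure (V → Bool)) : Prop :=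
  IsProbabilityMeasure μ ∧
  ∀ (S : Finset V) (s : V → Bool),
    μ (cylEvt S s) = ∏ v ∈ S, ENNReal.ofReal (if s v then c v else 1 - c v)

/-- μ is Shearer's measure μ_{G,p}. -/
def IsShearer {V : Type*} [Fintype V] (G : SimpleGraph V) (p : V → ℝ)
    (μ : Measure (V → Bool)) : Prop :=
  IsProbabilityMeasure μ ∧
  ∀ W : Finset V,
    (μ {ω | ∀ v, (ω v = false ↔ v ∈ W)}).toReal =
      ∑ T ∈ (Finset.univ : Finset V).powerset,
        if W ⊆ T ∧ ∀ u ∈ T, ∀ w ∈ T, ¬ G.Adj u w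
        then (-1 : ℝ) ^ (T.card - W.card) * ∏ v ∈ T, (1 - p v) else 0

/-!
Write `m W` for the probability that `Z` is `1` on all of `W`. Removing a vertex `v ∉ W` from
`insert v W` costs `m W - m (insert v W) = P(Z_W = 1, Z_v = 0)`, which weak dependence bounds by
`(1 - p v) * m (W ∖ N(v))`; the critical function satisfies the same recursion with equality,
`Ξ (insert v W) = Ξ W - (1 - p v) * Ξ (W ∖ N(v))`. An induction on `W` turns this into
`Ξ W * m U ≤ Ξ U * m W` for `U ⊆ W`, using `Ξ ≥ 0` to cancel; `U = ∅` is the claim.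
-/

section Recursion

variable {V : Type*} (G : SimpleGraph V) (p : V → ℝ)

lemma Xi_empty : Xi G ∅ p = 1 := by
  simp [Xi]

lemma forall_not_adj_insert_iff {v : V} {T : Finset V} :
    (∀ u ∈ insert v T, ∀ w ∈ insert v T, ¬ G.Adj u w) ↔
      (∀ w ∈ T, ¬ G.Adj v w) ∧ ∀ u ∈ T, ∀ w ∈ T, ¬ G.Adj u w := by
  simp only [Finset.forall_mem_insert, SimpleGraph.irrefl, not_false_eq_true, true_and]
  constructor
  · rintro ⟨hv, hT⟩
    exact ⟨hv, fun u hu => (hT u hu).2⟩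
  · rintro ⟨hv, hT⟩
    exact ⟨hv, fun u hu => ⟨fun h => hv u hu h.symm, hT u hu⟩⟩

lemma Xi_insert {v : V} {W : Finset V} (hv : v ∉ W) :
    Xi G (insert v W) p = Xi G W p - (1 - p v) * Xi G (W.filter (¬ G.Adj v ·)) p := by
  have hterm : ∀ T ∈ W.powerset,
      (if ∀ u ∈ insert v T, ∀ w ∈ insert v T, ¬ G.Adj u w
        then ∏ u ∈ insert v T, -(1 - p u) else 0) =
      if T ∈ (W.filter (¬ G.Adj v ·)).powerset then
        -(1 - p v) * if ∀ u ∈ T, ∀ w ∈ T, ¬ G.Adj u w then ∏ u ∈ T, -(1 - p u) else 0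
      else 0 := by
    intro T hT
    rw [Finset.mem_powerset] at hT
    have hvT : v ∉ T := fun h => hv (hT h)
    have hmem : T ∈ (W.filter (¬ G.Adj v ·)).powerset ↔ ∀ w ∈ T, ¬ G.Adj v w := by
      simp only [Finset.mem_powerset, Finset.subset_iff, Finset.mem_filter]
      exact ⟨fun h w hw => (h hw).2, fun h w hw => ⟨hT hw, h w hw⟩⟩
    simp only [forall_not_adj_insert_iff, Finset.prod_insert hvT, hmem]
    split_ifs <;> simp_all
  rw [Xi, Finset.sum_powerset_insert hv, Finset.sum_congr rfl hterm, Finset.sum_ite_mem,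
    Finset.inter_eq_right.mpr (Finset.powerset_mono.mpr (Finset.filter_subset _ W)),
    ← Finset.mul_sum, Xi, Xi]
  ring

lemma Xi_insert_mul_le {m : Finset V → ℝ} {v : V} {W : Finset V} (hv : v ∉ W)
    (hpv : p v ≤ 1) (hXi : 0 ≤ Xi G W p)
    (hstep : m W - m (insert v W) ≤ (1 - p v) * m (W.filter (¬ G.Adj v ·)))
    (hfilter :
      Xi G W p * m (W.filter (¬ G.Adj v ·)) ≤ Xi G (W.filter (¬ G.Adj v ·)) p * m W) :
    Xi G (insert v W) p * m W ≤ Xi G W p * m (insert v W) := by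
  rw [Xi_insert G p hv]
  nlinarith [mul_le_mul_of_nonneg_left hfilter (sub_nonneg.mpr hpv),
    mul_le_mul_of_nonneg_left hstep hXi]

lemma Xi_mul_le_mul_of_sub_le {m : Finset V → ℝ} (hp : ∀ v, p v ≤ 1)
    (hXi : ∀ W, 0 ≤ Xi G W p) (hm : ∀ W, 0 ≤ m W)
    (hstep : ∀ v W, v ∉ W → m W - m (insert v W) ≤ (1 - p v) * m (W.filter (¬ G.Adj v ·)))
    {U W : Finset V} (hUW : U ⊆ W) : Xi G W p * m U ≤ Xi G U p * m W := by
  induction W using Finset.strongInduction generalizing U with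
  | H W ih =>
    rcases hUW.eq_or_ssubset with rfl | hU
    · exact le_rfl
    obtain ⟨v, hvW, hvU⟩ := Finset.exists_of_ssubset hU
    obtain ⟨W, hv, rfl⟩ : ∃ W', v ∉ W' ∧ W = insert v W' :=
      ⟨W.erase v, Finset.notMem_erase v W, (Finset.insert_erase hvW).symm⟩
    have hWsub : W ⊂ insert v W := Finset.ssubset_insert hv
    have hUsub : U ⊆ W := fun u hu =>
      Finset.mem_of_mem_insert_of_ne (hUW hu) (ne_of_mem_of_not_mem hu hvU)
    have hU_W := ih W hWsub hUsub
    have hfilter := ih W hWsub (Finset.filter_subset (¬ G.Adj v ·) W)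
    have hW_ins := Xi_insert_mul_le G p hv (hp v) (hXi W) (hstep v W hv) hfilter
    rcases (hXi W).eq_or_lt with hzero | hpos
    · have : Xi G (insert v W) p = 0 := by
        have := Xi_insert G p hv
        nlinarith [hXi (insert v W), hXi (W.filter (¬ G.Adj v ·)), hp v]
      rw [this, zero_mul]
      exact mul_nonneg (hXi U) (hm _)
    · refine le_of_mul_le_mul_left ?_ hpos
      nlinarith [mul_le_mul_of_nonneg_left hU_W (hXi (insert v W)),
        mul_le_mul_of_nonneg_left hW_ins (hXi U)]

end Recursion

section WeakDependence

variable {V : Type*} {G : SimpleGraph V} {p : V → ℝ} {μ : Measure (V → Bool)}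

lemma measurableSet_eval_eq (v : V) (b : Bool) : MeasurableSet {ω : V → Bool | ω v = b} :=
  measurableSet_eq_fun (measurable_pi_apply v) measurable_const

lemma measure_cylEvt_diff_le (hμ : WeakDep G p μ) {v : V} {S : Finset V}
    (hS : ∀ w ∈ S, w ≠ v ∧ ¬ G.Adj v w) (s : V → Bool) :
    (μ (cylEvt S s \ {ω | ω v = true})).toReal ≤ (1 - p v) * (μ (cylEvt S s)).toReal := by
  have := hμ.1
  have hsplit : (μ (cylEvt S s)).toReal =
      (μ ({ω | ω v = true} ∩ cylEvt S s)).toReal +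
        (μ (cylEvt S s \ {ω | ω v = true})).toReal := by
    rw [Set.inter_comm, ← ENNReal.toReal_add (measure_ne_top μ _) (measure_ne_top μ _),
      measure_inter_add_sdiff _ (measurableSet_eval_eq v true)]
  rcases (ENNReal.toReal_nonneg (a := μ (cylEvt S s))).eq_or_lt with hzero | hpos
  · have := ENNReal.toReal_nonneg (a := μ ({ω | ω v = true} ∩ cylEvt S s))
    rw [← hzero]
    linarith [ENNReal.toReal_nonneg (a := μ (cylEvt S s \ {ω | ω v = true}))]
  · have := (le_div_iff₀ hpos).mp (hμ.2 v S hS s hpos)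
    linarith

noncomputable def probAllTrue (μ : Measure (V → Bool)) (S : Finset V) : ℝ :=
  (μ (cylEvt S fun _ => true)).toReal

lemma probAllTrue_empty [IsProbabilityMeasure μ] : probAllTrue μ ∅ = 1 := by
  simp [probAllTrue, cylEvt]

lemma probAllTrue_sub_le (hμ : WeakDep G p μ) {v : V} {W : Finset V} (hv : v ∉ W) :
    probAllTrue μ W - probAllTrue μ (insert v W) ≤
      (1 - p v) * probAllTrue μ (W.filter (¬ G.Adj v ·)) := by
  have := hμ.1
  have hins : cylEvt (insert v W) (fun _ => true) =
      cylEvt W (fun _ => true) ∩ {ω | ω v = true} := by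
    ext ω
    simp [cylEvt, and_comm]
  have hdiff : probAllTrue μ W - probAllTrue μ (insert v W) =
      (μ (cylEvt W (fun _ => true) \ {ω | ω v = true})).toReal := by
    rw [probAllTrue, probAllTrue, hins, sub_eq_iff_eq_add',
      ← ENNReal.toReal_add (measure_ne_top μ _) (measure_ne_top μ _),
      measure_inter_add_sdiff _ (measurableSet_eval_eq v true)]
  have hmono : cylEvt W (fun _ => true) ⊆ cylEvt (W.filter (¬ G.Adj v ·)) (fun _ => true) :=
    fun ω hω w hw => hω w (Finset.mem_filter.mp hw).1
  have hS : ∀ w ∈ W.filter (¬ G.Adj v ·), w ≠ v ∧ ¬ G.Adj v w := fun w hw =>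
    ⟨fun h => hv (h ▸ (Finset.mem_filter.mp hw).1), (Finset.mem_filter.mp hw).2⟩
  rw [hdiff]
  calc (μ (cylEvt W (fun _ => true) \ {ω | ω v = true})).toReal
      ≤ (μ (cylEvt (W.filter (¬ G.Adj v ·)) (fun _ => true) \ {ω | ω v = true})).toReal :=
        ENNReal.toReal_mono (measure_ne_top μ _)
          (measure_mono (Set.sdiff_subset_sdiff_left hmono))
    _ ≤ _ := measure_cylEvt_diff_le hμ hS _

end WeakDependence

theorem stmt2_general {V : Type*} (G : SimpleGraph V) (p : V → ℝ)
    (hp : ∀ v, p v ∈ Set.Icc (0:ℝ) 1)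
    (hShearer : ∀ W : Finset V, 0 ≤ Xi G W p)
    (μ : Measure (V → Bool)) (hμ : WeakDep G p μ) :
    ∀ W : Finset V,
      Xi G W p ≤ (μ (cylEvt W (fun _ => true))).toReal ∧ 0 ≤ Xi G W p := by
  intro W
  have := hμ.1
  have hratio := Xi_mul_le_mul_of_sub_le G p (m := probAllTrue μ) (fun v => (hp v).2)
    hShearer (fun _ => ENNReal.toReal_nonneg) (fun _ _ hv => probAllTrue_sub_le hμ hv)
    (Finset.empty_subset W)
  rw [Xi_empty, probAllTrue_empty, mul_one, one_mul] at hratio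
  exact ⟨hratio, hShearer W⟩

/-- Shearer's measure is a uniform minorant for open events. -/
theorem stmt2 {V : Type*} [Fintype V] (G : SimpleGraph V) (p : V → ℝ)
    (hp : ∀ v, p v ∈ Set.Icc (0:ℝ) 1)
    (hShearer : ∀ W : Finset V, 0 ≤ Xi G W p)
    (μ : Measure (V → Bool)) (hμ : WeakDep G p μ) :
    ∀ W : Finset V,
      Xi G W p ≤ (μ (cylEvt W (fun _ => true))).toReal ∧ 0 ≤ Xi G W p :=
  stmt2_general G p hp hShearer μ hμ
end

section
/- (Fernández–Procacci condition.) Let G = (V,E) be a locally finite simple graph and p ∈ [0,1]^V with q := 1 − p coordinatewise. If there exists a vector s ∈ (0,∞)^V such that for every v ∈ V one has q_v · ( Σ over independent sets T of G contained in N⁺(v) of Π_{w∈T} s_w ) ≤ s_v, then Ξ_{G[W]}(p) > 0 for every finite W ⊆ V, i.e. p lies in the interior Shearer set of G. -/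
open MeasureTheory Finset
open scoped Classical

set_option linter.unusedSectionVars false

namespace FPaux

variable {V : Type*} [DecidableEq V] (G : SimpleGraph V)

noncomputable def Fw (g : V → ℝ) (U : Finset V) : ℝ :=
  ∑ T ∈ U.powerset,
    if ∀ u ∈ T, ∀ w ∈ T, ¬ G.Adj u w then ∏ x ∈ T, g x else 0

lemma Xi_eq_Fw (W : Finset V) (p : V → ℝ) : Xi G W p = Fw G (fun v => -(1 - p v)) W := rfl

noncomputable def term (g : V → ℝ) (T : Finset V) : ℝ :=
  if ∀ u ∈ T, ∀ w ∈ T, ¬ G.Adj u w then ∏ x ∈ T, g x else 0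

lemma Fw_eq (g : V → ℝ) (U : Finset V) : Fw G g U = ∑ T ∈ U.powerset, term G g T :=
  Finset.sum_congr rfl fun _ _ => if_congr Iff.rfl rfl rfl

lemma term_empty (g : V → ℝ) : term G g ∅ = 1 := by simp [term]

lemma Fw_empty (g : V → ℝ) : Fw G g ∅ = 1 := by
  rw [Fw_eq]; simp [term_empty]

lemma term_nonneg (g : V → ℝ) (hg : ∀ x, 0 ≤ g x) (T : Finset V) : 0 ≤ term G g T := by
  unfold term; split
  · exact Finset.prod_nonneg fun x _ => hg x
  · exact le_refl 0

lemma one_le_Fw (g : V → ℝ) (hg : ∀ x, 0 ≤ g x) (U : Finset V) : 1 ≤ Fw G g U := by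
  rw [Fw_eq]
  have h := Finset.single_le_sum (f := fun T => term G g T)
    (fun T _ => term_nonneg G g hg T) (Finset.empty_mem_powerset U)
  simpa [term_empty] using h

lemma Fw_nonneg (g : V → ℝ) (hg : ∀ x, 0 ≤ g x) (U : Finset V) : 0 ≤ Fw G g U :=
  le_trans zero_le_one (one_le_Fw G g hg U)

lemma Fw_pos (g : V → ℝ) (hg : ∀ x, 0 ≤ g x) (U : Finset V) : 0 < Fw G g U :=
  lt_of_lt_of_le zero_lt_one (one_le_Fw G g hg U)

lemma Fw_mono (g : V → ℝ) (hg : ∀ x, 0 ≤ g x) {A B : Finset V} (h : A ⊆ B) :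
    Fw G g A ≤ Fw G g B := by
  rw [Fw_eq, Fw_eq]
  exact Finset.sum_le_sum_of_subset_of_nonneg (Finset.powerset_mono.2 h)
    (fun T _ _ => term_nonneg G g hg T)

lemma term_insert (g : V → ℝ) {v : V} {T : Finset V} (hvT : v ∉ T) :
    term G g (insert v T) = if ∀ u ∈ T, ¬ G.Adj v u then g v * term G g T else 0 := by
  have hiff : (∀ u ∈ insert v T, ∀ w ∈ insert v T, ¬G.Adj u w)
      ↔ ((∀ u ∈ T, ¬ G.Adj v u) ∧ ∀ u ∈ T, ∀ w ∈ T, ¬G.Adj u w) := by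
    constructor
    · intro h
      exact ⟨fun u hu => h v (Finset.mem_insert_self _ _) u (Finset.mem_insert_of_mem hu),
        fun u hu w hw => h u (Finset.mem_insert_of_mem hu) w (Finset.mem_insert_of_mem hw)⟩
    · rintro ⟨hvadj, hind⟩ u hu w hw
      rcases Finset.mem_insert.1 hu with rfl | hu'
      · rcases Finset.mem_insert.1 hw with rfl | hw'
        · exact G.irrefl
        · exact hvadj w hw'
      · rcases Finset.mem_insert.1 hw with rfl | hw'
        · exact fun hadj => hvadj u hu' hadj.symm
        · exact hind u hu' w hw'
  unfold term
  rw [if_congr hiff rfl rfl, Finset.prod_insert hvT]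
  by_cases h1 : ∀ u ∈ T, ¬ G.Adj v u
  · by_cases h2 : ∀ u ∈ T, ∀ w ∈ T, ¬G.Adj u w
    · rw [if_pos ⟨h1, h2⟩, if_pos h1, if_pos h2]
    · rw [if_neg (fun hc => h2 hc.2), if_pos h1, if_neg h2, mul_zero]
  · rw [if_neg (fun hc => h1 hc.1), if_neg h1]

lemma Fw_insert (g : V → ℝ) {v : V} {A : Finset V} (hv : v ∉ A) :
    Fw G g (insert v A) = Fw G g A + g v * Fw G g (A.filter fun u => ¬ G.Adj v u) := by
  classical
  rw [Fw_eq, Fw_eq, Fw_eq]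
  rw [Finset.sum_powerset_insert hv]
  congr 1
  have h1 : ∀ T ∈ A.powerset, term G g (insert v T)
      = (if T ∈ (A.filter fun u => ¬ G.Adj v u).powerset then g v * term G g T else 0) := by
    intro T hT
    rw [Finset.mem_powerset] at hT
    have hvT : v ∉ T := fun h => hv (hT h)
    rw [term_insert G g hvT]
    have : (∀ u ∈ T, ¬ G.Adj v u) ↔ T ∈ (A.filter fun u => ¬ G.Adj v u).powerset := by
      rw [Finset.mem_powerset]
      constructor
      · intro h u hu; exact Finset.mem_filter.2 ⟨hT hu, h u hu⟩
      · intro h u hu; exact (Finset.mem_filter.1 (h hu)).2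
    rw [if_congr this rfl rfl]
  rw [Finset.sum_congr rfl h1, Finset.sum_ite_mem, Finset.mul_sum]
  congr 1
  rw [Finset.inter_eq_right.2 (Finset.powerset_mono.2 (Finset.filter_subset _ A))]

lemma Fw_insert_adj (g : V → ℝ) {v : V} {D : Finset V} (hvD : v ∉ D)
    (hadj : ∀ u ∈ D, G.Adj v u) :
    Fw G g (insert v D) = Fw G g D + g v := by
  rw [Fw_insert G g hvD]
  have h : (D.filter fun u => ¬ G.Adj v u) = ∅ :=
    Finset.filter_false_of_mem (fun u hu => not_not_intro (hadj u hu))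
  rw [h, Fw_empty, mul_one]

lemma term_supermult (g : V → ℝ) (hg : ∀ x, 0 ≤ g x) (T : Finset V) (P : V → Prop) :
    term G g T ≤ term G g (T.filter P) * term G g (T.filter fun x => ¬ P x) := by
  by_cases hind : ∀ u ∈ T, ∀ w ∈ T, ¬G.Adj u w
  · have e1 : term G g (T.filter P) = ∏ x ∈ T.filter P, g x := by
      unfold term
      exact if_pos (fun u hu w hw => hind u (Finset.filter_subset _ _ hu) w (Finset.filter_subset _ _ hw))
    have e2 : term G g (T.filter fun x => ¬ P x) = ∏ x ∈ T.filter (fun x => ¬ P x), g x := by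
      unfold term
      exact if_pos (fun u hu w hw => hind u (Finset.filter_subset _ _ hu) w (Finset.filter_subset _ _ hw))
    have e0 : term G g T = ∏ x ∈ T, g x := if_pos hind
    rw [e0, e1, e2, Finset.prod_filter_mul_prod_filter_not]
  · have e0 : term G g T = 0 := if_neg hind
    rw [e0]
    exact mul_nonneg (term_nonneg G g hg _) (term_nonneg G g hg _)

lemma Fw_supermult (g : V → ℝ) (hg : ∀ x, 0 ≤ g x) (A : Finset V) (P : V → Prop) :
    Fw G g A ≤ Fw G g (A.filter P) * Fw G g (A.filter fun x => ¬ P x) := by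
  classical
  have step1 : Fw G g A ≤ ∑ T ∈ A.powerset,
      term G g (T.filter P) * term G g (T.filter fun x => ¬ P x) := by
    rw [Fw_eq]
    exact Finset.sum_le_sum fun T _ => term_supermult G g hg T P
  have hinj : ∀ T₁ ∈ A.powerset, ∀ T₂ ∈ A.powerset,
      (fun T : Finset V => (T.filter P, T.filter fun x => ¬ P x)) T₁ =
      (fun T : Finset V => (T.filter P, T.filter fun x => ¬ P x)) T₂ → T₁ = T₂ := by
    intro T₁ _ T₂ _ h
    have h1 : T₁.filter P = T₂.filter P := congrArg Prod.fst h
    have h2 : T₁.filter (fun x => ¬ P x) = T₂.filter (fun x => ¬ P x) := congrArg Prod.snd h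
    rw [← Finset.filter_union_filter_not_eq P T₁, ← Finset.filter_union_filter_not_eq P T₂, h1, h2]
  have step2 : ∑ T ∈ A.powerset, term G g (T.filter P) * term G g (T.filter fun x => ¬ P x)
      = ∑ pr ∈ A.powerset.image (fun T : Finset V => (T.filter P, T.filter fun x => ¬ P x)),
        term G g pr.1 * term G g pr.2 := by
    rw [Finset.sum_image hinj]
  have step3 : ∑ pr ∈ A.powerset.image (fun T : Finset V => (T.filter P, T.filter fun x => ¬ P x)),
        term G g pr.1 * term G g pr.2
      ≤ ∑ pr ∈ (A.filter P).powerset ×ˢ (A.filter fun x => ¬ P x).powerset,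
        term G g pr.1 * term G g pr.2 := by
    refine Finset.sum_le_sum_of_subset_of_nonneg ?_ (fun pr _ _ =>
      mul_nonneg (term_nonneg G g hg _) (term_nonneg G g hg _))
    intro pr hpr
    rw [Finset.mem_image] at hpr
    obtain ⟨T, hT, rfl⟩ := hpr
    rw [Finset.mem_powerset] at hT
    exact Finset.mem_product.2 ⟨Finset.mem_powerset.2 (Finset.filter_subset_filter P hT),
      Finset.mem_powerset.2 (Finset.filter_subset_filter _ hT)⟩
  have step4 : ∑ pr ∈ (A.filter P).powerset ×ˢ (A.filter fun x => ¬ P x).powerset,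
        term G g pr.1 * term G g pr.2
      = Fw G g (A.filter P) * Fw G g (A.filter fun x => ¬ P x) := by
    rw [Finset.sum_product, Fw_eq, Fw_eq, Finset.sum_mul_sum]
  linarith [step1, step2, step3, step4, step2 ▸ step1]

lemma Fw_key (g : V → ℝ) (hg : ∀ x, 0 ≤ g x) {w : V} {A : Finset V} (hwA : w ∉ A) :
    Fw G g A * (g w + Fw G g (A.filter fun u => G.Adj w u)) ≤
    Fw G g (A.filter fun u => G.Adj w u) * Fw G g (insert w A) := by
  rw [Fw_insert G g hwA]
  have hsup := Fw_supermult G g hg A (fun u => G.Adj w u)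
  nlinarith [mul_le_mul_of_nonneg_left hsup (hg w),
    Fw_nonneg G g hg (A.filter fun u => G.Adj w u),
    Fw_nonneg G g hg (A.filter fun u => ¬ G.Adj w u), Fw_nonneg G g hg A]

end FPaux


/-- the Fernández–Procacci condition implies that p lies in the
interior Shearer set. -/
theorem stmt6 {V : Type*} [DecidableEq V] (G : SimpleGraph V)
    (hlf : ∀ v : V, (G.neighborSet v).Finite)
    (p : V → ℝ) (hp : ∀ v, p v ∈ Set.Icc (0:ℝ) 1)
    (s : V → ℝ) (hs : ∀ v, 0 < s v)
    (hcond : ∀ v : V,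
      (1 - p v) *
        (∑ T ∈ (insert v (hlf v).toFinset).powerset,
          if ∀ u ∈ T, ∀ w ∈ T, ¬ G.Adj u w then ∏ w ∈ T, s w else 0) ≤ s v) :
    ∀ W : Finset V, 0 < Xi G W p := by
  classical
  open FPaux in
  have hq0 : ∀ v, 0 ≤ 1 - p v := fun v => by have := (hp v).2; linarith
  have hs0 : ∀ v, 0 ≤ s v := fun v => (hs v).le
  have hc : ∀ v, (1 - p v) * Fw G s (insert v (hlf v).toFinset) ≤ s v := by
    intro v
    have h := hcond v
    have e : Fw G s (insert v (hlf v).toFinset)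
        = ∑ T ∈ (insert v (hlf v).toFinset).powerset,
          if ∀ u ∈ T, ∀ w ∈ T, ¬ G.Adj u w then ∏ w ∈ T, s w else 0 :=
      Finset.sum_congr rfl fun _ _ => if_congr Iff.rfl rfl rfl
    rw [e]; exact h
  -- the insert-neighborhood identity
  have hNins : ∀ v : V, Fw G s (insert v (hlf v).toFinset) = Fw G s ((hlf v).toFinset) + s v := by
    intro v
    apply Fw_insert_adj
    · rw [Set.Finite.mem_toFinset, SimpleGraph.mem_neighborSet]
      exact G.irrefl
    · intro u hu
      rw [Set.Finite.mem_toFinset, SimpleGraph.mem_neighborSet] at hu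
      exact hu
  have key : ∀ n : ℕ, ∀ Y : Finset V, Y.card ≤ n →
      0 < Xi G Y p ∧
      ∀ v, v ∉ Y →
        (1 - p v) * Xi G (Y.filter fun u => ¬ G.Adj v u) p *
            (s v + Fw G s ((hlf v).toFinset \ Y)) ≤ s v * Xi G Y p := by
    intro n
    induction n with
    | zero =>
        intro Y hY
        have hY0 : Y = ∅ := Finset.card_eq_zero.1 (Nat.le_zero.1 hY)
        subst hY0
        constructor
        · rw [Xi_eq_Fw, Fw_empty]; norm_num
        · intro v _
          rw [Finset.filter_empty, Finset.sdiff_empty, Xi_eq_Fw, Fw_empty]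
          have h := hc v
          rw [hNins v] at h
          nlinarith [h]
    | succ n ih =>
        intro Y hY
        rcases Nat.lt_or_ge Y.card (n+1) with hlt | hge
        · exact ih Y (Nat.lt_succ_iff.1 hlt)
        have hcard : Y.card = n + 1 := le_antisymm hY hge
        have hpos : 0 < Xi G Y p := by
          have hne : Y.Nonempty := Finset.card_pos.1 (by omega)
          obtain ⟨v, hv⟩ := hne
          have hY'card : (Y.erase v).card ≤ n := by
            rw [Finset.card_erase_of_mem hv, hcard]; omega
          obtain ⟨hpos', hpart2'⟩ := ih (Y.erase v) hY'card
          have h2 := hpart2' v (Finset.notMem_erase v Y)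
          have hrec : Xi G Y p = Xi G (Y.erase v) p
              + (-(1 - p v)) * Xi G ((Y.erase v).filter fun u => ¬ G.Adj v u) p := by
            conv_lhs => rw [← Finset.insert_erase hv]
            rw [Xi_eq_Fw, Fw_insert G _ (Finset.notMem_erase v Y), ← Xi_eq_Fw, ← Xi_eq_Fw]
          have hZ1 : 1 ≤ Fw G s ((hlf v).toFinset \ (Y.erase v)) :=
            one_le_Fw G s hs0 _
          have hXf0 : 0 ≤ Xi G ((Y.erase v).filter fun u => ¬ G.Adj v u) p := by
            have hcf : ((Y.erase v).filter fun u => ¬ G.Adj v u).card ≤ n :=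
              le_trans (Finset.card_le_card (Finset.filter_subset _ _)) hY'card
            exact (ih _ hcf).1.le
          rw [hrec]
          nlinarith [h2, hZ1, hs v, hpos', hq0 v, hXf0,
            mul_nonneg (hq0 v) hXf0,
            mul_le_mul_of_nonneg_left hZ1 (mul_nonneg (hq0 v) hXf0)]
        refine ⟨hpos, ?_⟩
        intro v hv
        rcases (Y.filter fun u => G.Adj v u).eq_empty_or_nonempty with hSe | hSne
        · have hall : ∀ u ∈ Y, ¬ G.Adj v u := by
            intro u hu hadj
            have : u ∈ Y.filter fun u => G.Adj v u := Finset.mem_filter.2 ⟨hu, hadj⟩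
            rw [hSe] at this
            exact absurd this (Finset.notMem_empty u)
          have hYf : (Y.filter fun u => ¬ G.Adj v u) = Y := Finset.filter_true_of_mem hall
          rw [hYf]
          have hmono : Fw G s ((hlf v).toFinset \ Y) ≤ Fw G s ((hlf v).toFinset) :=
            Fw_mono G s hs0 (Finset.sdiff_subset)
          have hcv := hc v
          rw [hNins v] at hcv
          nlinarith [hpos.le, hq0 v, hcv, hmono,
            mul_le_mul_of_nonneg_left hmono (hq0 v),
            mul_le_mul_of_nonneg_right hcv hpos.le,
            mul_le_mul_of_nonneg_right (mul_le_mul_of_nonneg_left hmono (hq0 v)) hpos.le]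
        · obtain ⟨w, hwmem⟩ := hSne
          obtain ⟨hwY, hadjvw⟩ := Finset.mem_filter.1 hwmem
          have hvw : v ≠ w := fun h => hv (h ▸ hwY)
          have hY'card : (Y.erase w).card ≤ n := by
            rw [Finset.card_erase_of_mem hwY, hcard]; omega
          obtain ⟨hposY', hpart2⟩ := ih (Y.erase w) hY'card
          have hvY' : v ∉ Y.erase w := fun h => hv (Finset.mem_of_mem_erase h)
          have h1 := hpart2 v hvY'
          have h2' := hpart2 w (Finset.notMem_erase w Y)
          have hwNv : w ∈ (hlf v).toFinset := by
            rw [Set.Finite.mem_toFinset, SimpleGraph.mem_neighborSet]; exact hadjvw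
          have hD' : (hlf v).toFinset \ (Y.erase w) = insert w ((hlf v).toFinset \ Y) := by
            ext u
            simp only [Finset.mem_sdiff, Finset.mem_erase, Finset.mem_insert, not_and]
            constructor
            · rintro ⟨huN, hu2⟩
              by_cases huw : u = w
              · exact Or.inl huw
              · exact Or.inr ⟨huN, fun huY => (hu2 huw) huY⟩
            · rintro (rfl | ⟨huN, huY⟩)
              · exact ⟨hwNv, fun h => absurd rfl h⟩
              · exact ⟨huN, fun _ h => huY h⟩
          have hYf : (Y.filter fun u => ¬ G.Adj v u) = (Y.erase w).filter fun u => ¬ G.Adj v u := by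
            ext u
            simp only [Finset.mem_filter, Finset.mem_erase]
            constructor
            · rintro ⟨huY, hna⟩
              refine ⟨⟨fun h => ?_, huY⟩, hna⟩
              subst h; exact hna hadjvw
            · rintro ⟨⟨_, huY⟩, hna⟩; exact ⟨huY, hna⟩
          have hXrec : Xi G Y p = Xi G (Y.erase w) p
              + (-(1 - p w)) * Xi G ((Y.erase w).filter fun u => ¬ G.Adj w u) p := by
            conv_lhs => rw [← Finset.insert_erase hwY]
            rw [Xi_eq_Fw, Fw_insert G _ (Finset.notMem_erase w Y), ← Xi_eq_Fw, ← Xi_eq_Fw]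
          -- h2 : Ξ(Y') * ZE ≤ Ξ(Y) * (s w + ZE)
          have h2 : Xi G (Y.erase w) p * Fw G s ((hlf w).toFinset \ (Y.erase w))
              ≤ Xi G Y p * (s w + Fw G s ((hlf w).toFinset \ (Y.erase w))) := by
            rw [hXrec]
            nlinarith [h2']
          -- the combinatorial inequality h5
          have hvD : v ∉ (hlf v).toFinset \ Y := by
            intro h
            rw [Finset.mem_sdiff, Set.Finite.mem_toFinset, SimpleGraph.mem_neighborSet] at h
            exact G.irrefl h.1
          have hDadj : ∀ u ∈ (hlf v).toFinset \ Y, G.Adj v u := by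
            intro u hu
            rw [Finset.mem_sdiff, Set.Finite.mem_toFinset, SimpleGraph.mem_neighborSet] at hu
            exact hu.1
          have hwA : w ∉ insert v ((hlf v).toFinset \ Y) := by
            rw [Finset.mem_insert]
            rintro (rfl | h)
            · exact hvw rfl
            · exact (Finset.mem_sdiff.1 h).2 hwY
          have hFA : Fw G s (insert v ((hlf v).toFinset \ Y))
              = Fw G s ((hlf v).toFinset \ Y) + s v := Fw_insert_adj G s hvD hDadj
          have hvwD : v ∉ insert w ((hlf v).toFinset \ Y) := by
            rw [Finset.mem_insert]
            rintro (rfl | h)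
            · exact hvw rfl
            · exact hvD h
          have hFiA : Fw G s (insert w (insert v ((hlf v).toFinset \ Y)))
              = Fw G s (insert w ((hlf v).toFinset \ Y)) + s v := by
            rw [Finset.insert_comm]
            apply Fw_insert_adj G s hvwD
            intro u hu
            rcases Finset.mem_insert.1 hu with rfl | hu'
            · exact hadjvw
            · exact hDadj u hu'
          have h3 := Fw_key G s hs0 hwA
          rw [hFiA, hFA] at h3
          -- h3 : (Fw D + s v) * (s w + Fw B) ≤ Fw B * (Fw (insert w D) + s v)
          have hBE : (insert v ((hlf v).toFinset \ Y)).filter (fun u => G.Adj w u)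
              ⊆ (hlf w).toFinset \ (Y.erase w) := by
            intro u hu
            obtain ⟨huA, hadjwu⟩ := Finset.mem_filter.1 hu
            rw [Finset.mem_sdiff, Set.Finite.mem_toFinset, SimpleGraph.mem_neighborSet,
              Finset.mem_erase]
            refine ⟨hadjwu, fun hcon => ?_⟩
            rcases Finset.mem_insert.1 huA with rfl | hu'
            · exact hv hcon.2
            · exact (Finset.mem_sdiff.1 hu').2 hcon.2
          have h4 : Fw G s ((insert v ((hlf v).toFinset \ Y)).filter (fun u => G.Adj w u))
              ≤ Fw G s ((hlf w).toFinset \ (Y.erase w)) := Fw_mono G s hs0 hBE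
          have hB1 : (1:ℝ) ≤ Fw G s ((insert v ((hlf v).toFinset \ Y)).filter (fun u => G.Adj w u)) :=
            one_le_Fw G s hs0 _
          have hZE0 : (0:ℝ) ≤ Fw G s ((hlf w).toFinset \ (Y.erase w)) := Fw_nonneg G s hs0 _
          have hD0 : (0:ℝ) ≤ Fw G s ((hlf v).toFinset \ Y) := Fw_nonneg G s hs0 _
          have h5 : (s v + Fw G s ((hlf v).toFinset \ Y))
                * (s w + Fw G s ((hlf w).toFinset \ (Y.erase w)))
              ≤ Fw G s ((hlf w).toFinset \ (Y.erase w))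
                * (s v + Fw G s (insert w ((hlf v).toFinset \ Y))) := by
            set a := Fw G s ((hlf v).toFinset \ Y)
            set b := Fw G s (insert w ((hlf v).toFinset \ Y))
            set z := Fw G s ((insert v ((hlf v).toFinset \ Y)).filter (fun u => G.Adj w u))
            set e := Fw G s ((hlf w).toFinset \ (Y.erase w))
            have fact1 : (a + s v) * (s w + z) * e ≤ z * (b + s v) * e :=
              mul_le_mul_of_nonneg_right h3 hZE0
            have fact2 : 0 ≤ (s v + a) * (s w * (e - z)) :=
              mul_nonneg (by linarith [hs v]) (mul_nonneg (hs0 w) (by linarith [h4]))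
            have hchain : (s v + a) * (s w + e) * z ≤ (e * (s v + b)) * z := by nlinarith [fact1, fact2]
            have hzpos : (0:ℝ) < z := lt_of_lt_of_le zero_lt_one hB1
            exact le_of_mul_le_mul_right hchain hzpos
          -- final assembly
          rw [hYf]
          rw [hD'] at h1
          set Xf := Xi G ((Y.erase w).filter fun u => ¬ G.Adj v u) p with hXfdef
          have hXf0 : 0 ≤ Xf := by
            have hcf : ((Y.erase w).filter fun u => ¬ G.Adj v u).card ≤ n :=
              le_trans (Finset.card_le_card (Finset.filter_subset _ _)) hY'card
            exact (ih _ hcf).1.le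
          set ZE := Fw G s ((hlf w).toFinset \ (Y.erase w)) with hZEdef
          set ZD := Fw G s ((hlf v).toFinset \ Y) with hZDdef
          set ZD' := Fw G s (insert w ((hlf v).toFinset \ Y)) with hZD'def
          -- goal : (1 - p v) * Xf * (s v + ZD) ≤ s v * Xi G Y p
          have hq : 0 ≤ (1 - p v) * Xf := mul_nonneg (hq0 v) hXf0
          have hbig : (1 - p v) * Xf * (s v + ZD) * (s w + ZE)
              ≤ s v * Xi G Y p * (s w + ZE) := by
            have c1 : (1 - p v) * Xf * ((s v + ZD) * (s w + ZE))
                ≤ (1 - p v) * Xf * (ZE * (s v + ZD')) :=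
              mul_le_mul_of_nonneg_left h5 hq
            have c2 : ((1 - p v) * Xf * (s v + ZD')) * ZE ≤ (s v * Xi G (Y.erase w) p) * ZE :=
              mul_le_mul_of_nonneg_right h1 hZE0
            have c3 : s v * (Xi G (Y.erase w) p * ZE) ≤ s v * (Xi G Y p * (s w + ZE)) :=
              mul_le_mul_of_nonneg_left h2 (hs0 v)
            nlinarith [c1, c2, c3]
          have hswZE : (0:ℝ) < s w + ZE := by nlinarith [hs w, hZE0]
          exact le_of_mul_le_mul_right hbig hswZE
  intro W
  exact (key W.card W le_rfl).1
end

section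
/- Let G = (V,E) be a finite simple graph and p ∈ [0,1]^V. If p does not lie in the interior Shearer set of G (i.e. there exists W ⊆ V with Ξ_{G[W]}(p) ≤ 0), then there exists a BRF Z in the strong dependency class C_s^G(p) with P(Z_v = 1 for all v ∈ V) = 0. -/
open MeasureTheory Finset
open scoped Classical

namespace Stmt9
set_option linter.unusedSectionVars false
variable {V : Type*} [Fintype V]

def ind (G : SimpleGraph V) (A : Finset V) : Prop := ∀ u ∈ A, ∀ w ∈ A, ¬ G.Adj u w

lemma ind_subset {G : SimpleGraph V} {A B : Finset V} (h : A ⊆ B) (hB : ind G B) : ind G A :=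
  fun u hu w hw => hB u (h hu) w (h hw)

lemma ind_empty (G : SimpleGraph V) : ind G ∅ := by intro u hu; simp at hu

lemma ind_singleton (G : SimpleGraph V) (v : V) : ind G {v} := by
  intro u hu w hw
  simp only [mem_singleton] at hu hw
  subst hu; subst hw; exact G.irrefl

lemma Xi_def (G : SimpleGraph V) (W : Finset V) (q : V → ℝ) :
    Xi G W q = ∑ T ∈ W.powerset, if ind G T then ∏ v ∈ T, -(1 - q v) else 0 := by
  unfold Xi ind
  exact Finset.sum_congr rfl fun T _ => by split_ifs with h1 h2 <;> first | rfl | tauto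

lemma Xi_insert (G : SimpleGraph V) (q : V → ℝ) {v : V} {U : Finset V} (hv : v ∉ U) :
    Xi G (insert v U) q
      = Xi G U q - (1 - q v) * Xi G (U.filter (fun x => ¬ G.Adj v x)) q := by
  set F := U.filter (fun x => ¬ G.Adj v x) with hF
  rw [Xi_def, Finset.sum_powerset_insert hv]
  have key : ∀ T ∈ U.powerset,
      (if ind G (insert v T) then ∏ x ∈ insert v T, -(1 - q x) else 0)
        = (if ind G T ∧ ∀ u ∈ T, ¬ G.Adj v u then -(1 - q v) * ∏ x ∈ T, -(1 - q x) else 0) := by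
    intro T hT
    rw [mem_powerset] at hT
    have hvT : v ∉ T := fun h => hv (hT h)
    by_cases h1 : ind G (insert v T)
    · rw [if_pos h1, if_pos, Finset.prod_insert hvT]
      exact ⟨ind_subset (Finset.subset_insert _ _) h1,
        fun u hu => h1 v (mem_insert_self _ _) u (mem_insert_of_mem hu)⟩
    · rw [if_neg h1, if_neg]
      rintro ⟨h2, h3⟩
      apply h1
      intro a ha b hb
      rcases mem_insert.mp ha with rfl | ha' <;> rcases mem_insert.mp hb with rfl | hb'
      · exact G.irrefl
      · exact h3 b hb'
      · exact fun hadj => h3 a ha' hadj.symm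
      · exact h2 a ha' b hb'
  have step1 : ∑ T ∈ U.powerset,
        (if ind G T ∧ ∀ u ∈ T, ¬ G.Adj v u then -(1 - q v) * ∏ x ∈ T, -(1 - q x) else 0)
      = ∑ T ∈ F.powerset,
        (if ind G T ∧ ∀ u ∈ T, ¬ G.Adj v u then -(1 - q v) * ∏ x ∈ T, -(1 - q x) else 0) := by
    refine (Finset.sum_subset (Finset.powerset_mono.mpr (Finset.filter_subset _ _)) ?_).symm
    intro T hT hT'
    rw [mem_powerset] at hT
    rw [if_neg]
    rintro ⟨h2, h3⟩
    exact hT' (mem_powerset.mpr fun x hx => Finset.mem_filter.mpr ⟨hT hx, h3 x hx⟩)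
  have step2 : ∑ T ∈ F.powerset,
        (if ind G T ∧ ∀ u ∈ T, ¬ G.Adj v u then -(1 - q v) * ∏ x ∈ T, -(1 - q x) else 0)
      = -((1 - q v) * Xi G F q) := by
    rw [Xi_def, Finset.mul_sum, ← Finset.sum_neg_distrib]
    refine Finset.sum_congr rfl ?_
    intro T hT
    rw [mem_powerset] at hT
    have h3 : ∀ u ∈ T, ¬ G.Adj v u := fun u hu => (Finset.mem_filter.mp (hT hu)).2
    by_cases h : ind G T
    · rw [if_pos ⟨h, h3⟩, if_pos h]; ring
    · rw [if_neg (fun hc => h hc.1), if_neg h]; ring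
  rw [Finset.sum_congr rfl key, step1, step2, ← Xi_def]
  ring

lemma Xi_one (G : SimpleGraph V) (U : Finset V) : Xi G U (fun _ => (1:ℝ)) = 1 := by
  rw [Xi_def]
  rw [Finset.sum_eq_single ∅]
  · rw [if_pos (ind_empty G)]; simp
  · intro T _ hTne
    obtain ⟨a, ha⟩ := Finset.nonempty_iff_ne_empty.mpr hTne
    split_ifs
    · exact Finset.prod_eq_zero ha (by ring)
    · rfl
  · intro h; exact absurd (Finset.empty_mem_powerset U) h

lemma Xi_union_le (G : SimpleGraph V) (q : V → ℝ) (h1 : ∀ x, q x ≤ 1)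
    (hnn : ∀ U, 0 ≤ Xi G U q) (W A : Finset V) :
    Xi G (W ∪ A) q ≤ Xi G W q := by
  induction A using Finset.induction_on with
  | empty => simp
  | @insert a A ha ih =>
    by_cases haw : a ∈ W ∪ A
    · rw [Finset.union_insert, Finset.insert_eq_self.mpr haw]
      exact ih
    · rw [Finset.union_insert, Xi_insert G q haw]
      have : 0 ≤ (1 - q a) * Xi G ((W ∪ A).filter (fun x => ¬ G.Adj a x)) q :=
        mul_nonneg (by linarith [h1 a]) (hnn _)
      linarith

lemma Xi_continuous (G : SimpleGraph V) (U : Finset V) (p : V → ℝ) :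
    Continuous (fun t : ℝ => Xi G U (fun v => p v + t * (1 - p v))) := by
  unfold Xi
  apply continuous_finset_sum
  intro T _
  by_cases h : ∀ u ∈ T, ∀ w ∈ T, ¬ G.Adj u w
  · simp only [if_pos h]
    apply continuous_finset_prod
    intro v _
    fun_prop
  · simp only [if_neg h]
    exact continuous_const

lemma exists_crit (G : SimpleGraph V) (p : V → ℝ) (hp0 : ∀ v, 0 ≤ p v) (hp1 : ∀ v, p v ≤ 1)
    (hns : ∃ W : Finset V, Xi G W p ≤ 0) :
    ∃ r : V → ℝ, (∀ v, p v ≤ r v) ∧ (∀ v, r v ≤ 1) ∧ (∀ U, 0 ≤ Xi G U r) ∧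
      Xi G Finset.univ r = 0 := by
  set pt : ℝ → V → ℝ := fun t v => p v + t * (1 - p v) with hpt
  set A : Set ℝ := Set.Icc 0 1 ∩ ⋃ U : Finset V, {t | Xi G U (pt t) ≤ 0} with hA
  have hA0 : (0:ℝ) ∈ A := by
    obtain ⟨W, hW⟩ := hns
    refine ⟨⟨le_refl 0, zero_le_one⟩, Set.mem_iUnion.mpr ⟨W, ?_⟩⟩
    have : pt 0 = p := by funext v; simp [hpt]
    simp only [Set.mem_setOf_eq, this]
    exact hW
  have hclosed : IsClosed A := by
    refine IsClosed.inter isClosed_Icc (isClosed_iUnion_of_finite fun U => ?_)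
    exact isClosed_le (Xi_continuous G U p) continuous_const
  have hbdd : BddAbove A := ⟨1, fun t ht => ht.1.2⟩
  set t0 := sSup A with ht0
  have ht0A : t0 ∈ A := hclosed.csSup_mem ⟨0, hA0⟩ hbdd
  have ht00 : 0 ≤ t0 := ht0A.1.1
  have ht01 : t0 ≤ 1 := ht0A.1.2
  have hnn : ∀ U, 0 ≤ Xi G U (pt t0) := by
    intro U
    by_contra hneg
    push_neg at hneg
    have ht0lt : t0 < 1 := by
      rcases lt_or_eq_of_le ht01 with h | h
      · exact h
      · exfalso
        have hpt1 : pt t0 = fun _ => (1:ℝ) := by funext v; simp only [hpt]; rw [h]; ring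
        rw [hpt1, Xi_one] at hneg
        linarith
    have hev : ∀ᶠ t in nhds t0, Xi G U (pt t) < 0 :=
      Filter.Tendsto.eventually_lt_const hneg ((Xi_continuous G U p).continuousAt)
    obtain ⟨δ, hδpos, hδ⟩ := Metric.eventually_nhds_iff.mp hev
    set t1 := min 1 (t0 + δ/2) with ht1
    have ht1gt : t0 < t1 := lt_min ht0lt (by linarith)
    have ht1mem : t1 ∈ A := by
      refine ⟨⟨le_trans ht00 ht1gt.le, min_le_left _ _⟩, Set.mem_iUnion.mpr ⟨U, ?_⟩⟩
      have hdist : dist t1 t0 < δ := by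
        rw [Real.dist_eq, abs_of_nonneg (by linarith)]
        have : t1 ≤ t0 + δ/2 := min_le_right _ _
        linarith
      exact le_of_lt (hδ hdist)
    have := le_csSup hbdd ht1mem
    linarith
  refine ⟨pt t0, ?_, ?_, hnn, ?_⟩
  · intro v
    have : 0 ≤ t0 * (1 - p v) := mul_nonneg ht00 (by linarith [hp1 v])
    simp only [hpt]; linarith
  · intro v
    have : 0 ≤ (1 - t0) * (1 - p v) := mul_nonneg (by linarith) (by linarith [hp1 v])
    simp only [hpt]; nlinarith
  · obtain ⟨W0, hW0⟩ := Set.mem_iUnion.mp ht0A.2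
    have h2 : Xi G Finset.univ (pt t0) ≤ Xi G W0 (pt t0) := by
      have := Xi_union_le G (pt t0) (fun v => by
        have : 0 ≤ (1 - t0) * (1 - p v) := mul_nonneg (by linarith) (by linarith [hp1 v])
        simp only [hpt]; nlinarith) hnn W0 Finset.univ
      rwa [show W0 ∪ Finset.univ = Finset.univ from by ext x; simp] at this
    exact le_antisymm (le_trans h2 hW0) (hnn _)

section Meas
variable (G : SimpleGraph V) (p r : V → ℝ)

noncomputable def bet (v : V) : ℝ := if r v = 0 then 0 else p v / r v

noncomputable def eI (v : V) (b : Bool) : ℝ :=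
  if b then -(bet p r v * (1 - r v)) else bet p r v * (1 - r v)

noncomputable def eO (v : V) (b : Bool) : ℝ := if b then bet p r v else 1 - bet p r v

noncomputable def CC (S : Finset V) (s : V → Bool) : ℝ :=
  ∑ A ∈ S.powerset,
    if ind G A then (∏ v ∈ A, eI p r v (s v)) * ∏ v ∈ S \ A, eO p r v (s v) else 0

noncomputable def RT (T : Finset V) : Finset V :=
  Finset.univ.filter (fun x => x ∉ T ∧ ∀ u ∈ T, ¬ G.Adj u x)

variable {p r}

lemma bet_nonneg (hp0 : ∀ v, 0 ≤ p v) (hpr : ∀ v, p v ≤ r v) (v : V) : 0 ≤ bet p r v := by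
  unfold bet; split_ifs with h
  · exact le_refl 0
  · exact div_nonneg (hp0 v) (le_trans (hp0 v) (hpr v))

lemma bet_le_one (hp0 : ∀ v, 0 ≤ p v) (hpr : ∀ v, p v ≤ r v) (v : V) : bet p r v ≤ 1 := by
  unfold bet; split_ifs with h
  · exact zero_le_one
  · have hr : 0 < r v := lt_of_le_of_ne (le_trans (hp0 v) (hpr v)) (Ne.symm h)
    exact (div_le_one hr).mpr (hpr v)

lemma bet_mul (hp0 : ∀ v, 0 ≤ p v) (hpr : ∀ v, p v ≤ r v) (v : V) :
    bet p r v * r v = p v := by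
  unfold bet; split_ifs with h
  · have : p v = 0 := le_antisymm (h ▸ hpr v) (hp0 v)
    rw [this, h]; ring
  · exact div_mul_cancel₀ _ h

lemma eO_nonneg (hp0 : ∀ v, 0 ≤ p v) (hpr : ∀ v, p v ≤ r v) (v : V) (b : Bool) :
    0 ≤ eO p r v b := by
  unfold eO; cases b
  · simp only [Bool.false_eq_true, if_false]
    linarith [bet_le_one hp0 hpr v]
  · simp only [if_true]
    exact bet_nonneg hp0 hpr v

end Meas

section Key
variable {V : Type*} [Fintype V] (G : SimpleGraph V) (p r : V → ℝ)

lemma inner_eval (ω : V → Bool) (I : Finset V) :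
    ∑ T ∈ I.powerset, (if ∀ v ∈ T, ω v = false
        then (∏ v ∈ T, (1 - r v)) * (∏ v ∈ I \ T, -(1 - r v)) *
          ∏ v ∈ Finset.univ \ T, eO p r v (ω v)
        else 0)
      = (∏ v ∈ I, eI p r v (ω v)) * ∏ v ∈ Finset.univ \ I, eO p r v (ω v) := by
  classical
  set I0 := I.filter (fun v => ω v = false) with hI0
  have hdom : I.powerset.filter (fun T => ∀ v ∈ T, ω v = false) = I0.powerset := by
    ext T
    simp only [mem_filter, mem_powerset, hI0]
    constructor
    · rintro ⟨h1, h2⟩ x hx; exact mem_filter.mpr ⟨h1 hx, h2 x hx⟩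
    · intro h
      exact ⟨fun x hx => (mem_filter.mp (h hx)).1, fun x hx => (mem_filter.mp (h hx)).2⟩
  rw [← Finset.sum_filter, hdom]
  have hI0I : I0 ⊆ I := Finset.filter_subset _ _
  have hsplit : I \ I0 = I.filter (fun v => ¬ (ω v = false)) := by
    ext x; simp only [mem_sdiff, hI0, mem_filter]; tauto
  have hterm : ∀ T ∈ I0.powerset,
      (∏ v ∈ T, (1 - r v)) * (∏ v ∈ I \ T, -(1 - r v)) *
          ∏ v ∈ Finset.univ \ T, eO p r v (ω v)
      = ((∏ v ∈ T, (1 - r v)) * ∏ v ∈ I0 \ T, (-(1 - r v) * eO p r v (ω v)))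
        * ((∏ v ∈ I \ I0, (-(1 - r v) * eO p r v (ω v)))
            * ∏ v ∈ Finset.univ \ I, eO p r v (ω v)) := by
    intro T hT
    rw [mem_powerset] at hT
    have hTI : T ⊆ I := hT.trans hI0I
    have h1 : Finset.univ \ T = (I \ T) ∪ (Finset.univ \ I) := by
      ext x; simp only [mem_sdiff, mem_union, mem_univ, true_and]
      constructor
      · intro hx; by_cases hxI : x ∈ I
        · exact Or.inl ⟨hxI, hx⟩
        · exact Or.inr hxI
      · rintro (⟨_, hx⟩ | hx)
        · exact hx
        · exact fun hc => hx (hTI hc)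
    have hd1 : Disjoint (I \ T) (Finset.univ \ I) := by
      rw [Finset.disjoint_left]
      intro a ha hb
      exact (mem_sdiff.mp hb).2 (mem_sdiff.mp ha).1
    have h2 : I \ T = (I0 \ T) ∪ (I \ I0) := by
      ext x
      simp only [mem_sdiff, mem_union]
      constructor
      · rintro ⟨hxI, hxT⟩
        by_cases hx0 : x ∈ I0
        · exact Or.inl ⟨hx0, hxT⟩
        · exact Or.inr ⟨hxI, hx0⟩
      · rintro (⟨hx0, hxT⟩ | ⟨hxI, hx0⟩)
        · exact ⟨hI0I hx0, hxT⟩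
        · exact ⟨hxI, fun hc => hx0 (hT hc)⟩
    have hd2 : Disjoint (I0 \ T) (I \ I0) := by
      rw [Finset.disjoint_left]
      intro a ha hb
      exact (mem_sdiff.mp hb).2 (mem_sdiff.mp ha).1
    rw [h1, Finset.prod_union hd1, h2, Finset.prod_union hd2, Finset.prod_union hd2,
      Finset.prod_mul_distrib, Finset.prod_mul_distrib]
    ring
  rw [Finset.sum_congr rfl hterm, ← Finset.sum_mul, ← Finset.prod_add]
  have hA : ∀ v ∈ I0, (1 - r v) + (-(1 - r v) * eO p r v (ω v)) = eI p r v (ω v) := by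
    intro v hv
    have hω : ω v = false := (mem_filter.mp hv).2
    rw [hω]
    unfold eI eO
    simp only [Bool.false_eq_true, if_false]
    ring
  have hB : ∀ v ∈ I \ I0, -(1 - r v) * eO p r v (ω v) = eI p r v (ω v) := by
    intro v hv
    rw [hsplit, mem_filter] at hv
    have hω : ω v = true := by
      cases hωv : ω v
      · exact absurd hωv hv.2
      · rfl
    rw [hω]
    unfold eI eO
    simp only [if_true]
    ring
  rw [Finset.prod_congr rfl hA, Finset.prod_congr rfl hB]
  have hjoin : (∏ x ∈ I0, eI p r x (ω x)) * (∏ x ∈ I \ I0, eI p r x (ω x))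
      = ∏ v ∈ I, eI p r v (ω v) := by
    rw [hsplit, hI0, Finset.prod_filter_mul_prod_filter_not]
  rw [← hjoin]
  ring

lemma CC_univ_eq (ω : V → Bool) :
    CC G p r Finset.univ ω
      = ∑ T ∈ (Finset.univ : Finset V).powerset,
          if ind G T ∧ (∀ v ∈ T, ω v = false)
          then (∏ v ∈ T, (1 - r v)) * Xi G (RT G T) r *
            ∏ v ∈ Finset.univ \ T, eO p r v (ω v)
          else 0 := by
  classical
  symm
  have stepA : ∀ T ∈ (Finset.univ : Finset V).powerset,
      (if ind G T ∧ (∀ v ∈ T, ω v = false)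
        then (∏ v ∈ T, (1 - r v)) * Xi G (RT G T) r *
          ∏ v ∈ Finset.univ \ T, eO p r v (ω v)
        else 0)
      = ∑ J ∈ (RT G T).powerset,
          (if ind G T ∧ ind G J then
            (if ∀ v ∈ T, ω v = false
             then (∏ v ∈ T, (1 - r v)) * (∏ v ∈ J, -(1 - r v)) *
               ∏ v ∈ Finset.univ \ T, eO p r v (ω v)
             else 0)
          else 0) := by
    intro T _
    by_cases h1 : ind G T
    · by_cases h2 : ∀ v ∈ T, ω v = false
      · rw [if_pos ⟨h1, h2⟩, Xi_def, Finset.mul_sum, Finset.sum_mul]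
        refine Finset.sum_congr rfl ?_
        intro J _
        by_cases hJ : ind G J
        · rw [if_pos hJ, if_pos ⟨h1, hJ⟩, if_pos h2]
        · rw [if_neg hJ, if_neg (fun hc => hJ hc.2)]; ring
      · rw [if_neg (fun hc => h2 hc.2)]
        symm
        apply Finset.sum_eq_zero
        intro J _
        by_cases hc : ind G T ∧ ind G J
        · rw [if_pos hc, if_neg h2]
        · rw [if_neg hc]
    · rw [if_neg (fun hc => h1 hc.1)]
      symm
      apply Finset.sum_eq_zero
      intro J _
      rw [if_neg (fun hc => h1 hc.1)]
  rw [Finset.sum_congr rfl stepA, Finset.sum_sigma']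
  rw [← Finset.sum_filter]
  -- bijection
  have bij :
      ∑ z ∈ (((Finset.univ : Finset V).powerset.sigma fun T => (RT G T).powerset).filter
          fun z => ind G z.1 ∧ ind G z.2),
        (if ∀ v ∈ z.1, ω v = false
          then (∏ v ∈ z.1, (1 - r v)) * (∏ v ∈ z.2, -(1 - r v)) *
            ∏ v ∈ Finset.univ \ z.1, eO p r v (ω v)
          else 0)
      = ∑ z ∈ (((Finset.univ : Finset V).powerset.sigma fun I => I.powerset).filter
          fun z => ind G z.1),
        (if ∀ v ∈ z.2, ω v = false
          then (∏ v ∈ z.2, (1 - r v)) * (∏ v ∈ z.1 \ z.2, -(1 - r v)) *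
            ∏ v ∈ Finset.univ \ z.2, eO p r v (ω v)
          else 0) := by
    refine Finset.sum_nbij' (fun z => ⟨z.1 ∪ z.2, z.1⟩) (fun z => ⟨z.2, z.1 \ z.2⟩)
      ?_ ?_ ?_ ?_ ?_
    · rintro ⟨T, J⟩ hz
      simp only [Finset.mem_filter, Finset.mem_sigma, Finset.mem_powerset] at hz ⊢
      obtain ⟨⟨hTu, hJ⟩, hiT, hiJ⟩ := hz
      have hRT : ∀ x ∈ J, x ∉ T ∧ ∀ u ∈ T, ¬ G.Adj u x := by
        intro x hx
        have := hJ hx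
        unfold RT at this
        exact (mem_filter.mp this).2
      refine ⟨⟨Finset.subset_univ _, Finset.subset_union_left⟩, ?_⟩
      intro a ha b hb
      rcases Finset.mem_union.mp ha with ha' | ha' <;>
        rcases Finset.mem_union.mp hb with hb' | hb'
      · exact hiT a ha' b hb'
      · exact (hRT b hb').2 a ha'
      · exact fun hadj => (hRT a ha').2 b hb' hadj.symm
      · exact hiJ a ha' b hb'
    · rintro ⟨I, T⟩ hz
      simp only [Finset.mem_filter, Finset.mem_sigma, Finset.mem_powerset] at hz ⊢
      obtain ⟨⟨hIu, hTI⟩, hiI⟩ := hz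
      refine ⟨⟨Finset.subset_univ _, ?_⟩, ind_subset hTI hiI, ind_subset (Finset.sdiff_subset) hiI⟩
      intro x hx
      rw [mem_sdiff] at hx
      unfold RT
      exact mem_filter.mpr ⟨mem_univ _, hx.2, fun u hu => hiI u (hTI hu) x hx.1⟩
    · rintro ⟨T, J⟩ hz
      simp only [Finset.mem_filter, Finset.mem_sigma, Finset.mem_powerset] at hz
      obtain ⟨⟨hTu, hJ⟩, _, _⟩ := hz
      have hdisj : Disjoint T J := by
        rw [Finset.disjoint_right]
        intro x hx
        have := hJ hx
        unfold RT at this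
        exact (mem_filter.mp this).2.1
      simp only [Finset.union_sdiff_cancel_left hdisj]
    · rintro ⟨I, T⟩ hz
      simp only [Finset.mem_filter, Finset.mem_sigma, Finset.mem_powerset] at hz
      obtain ⟨⟨hIu, hTI⟩, _⟩ := hz
      simp only [Finset.union_sdiff_of_subset hTI]
    · rintro ⟨T, J⟩ hz
      simp only [Finset.mem_filter, Finset.mem_sigma, Finset.mem_powerset] at hz
      obtain ⟨⟨hTu, hJ⟩, _, _⟩ := hz
      have hdisj : Disjoint T J := by
        rw [Finset.disjoint_right]
        intro x hx
        have := hJ hx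
        unfold RT at this
        exact (mem_filter.mp this).2.1
      simp only [Finset.union_sdiff_cancel_left hdisj]
  rw [bij, Finset.sum_filter, Finset.sum_sigma]
  have final : ∀ I ∈ (Finset.univ : Finset V).powerset,
      (∑ T ∈ I.powerset,
        if ind G I then
          (if ∀ v ∈ T, ω v = false
            then (∏ v ∈ T, (1 - r v)) * (∏ v ∈ I \ T, -(1 - r v)) *
              ∏ v ∈ Finset.univ \ T, eO p r v (ω v)
            else 0)
        else 0)
      = if ind G I then (∏ v ∈ I, eI p r v (ω v)) * ∏ v ∈ Finset.univ \ I, eO p r v (ω v)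
        else 0 := by
    intro I _
    by_cases hI : ind G I
    · simp only [if_pos hI]
      exact inner_eval p r ω I
    · simp only [if_neg hI]
      exact Finset.sum_const_zero
  exact Eq.trans (Finset.sum_congr rfl final) rfl

end Key

section Props
variable {V : Type*} [Fintype V] (G : SimpleGraph V) {p r : V → ℝ}

lemma w_nonneg (hp0 : ∀ v, 0 ≤ p v) (hpr : ∀ v, p v ≤ r v) (hr1 : ∀ v, r v ≤ 1)
    (hXi : ∀ U, 0 ≤ Xi G U r) (ω : V → Bool) : 0 ≤ CC G p r Finset.univ ω := by
  rw [CC_univ_eq]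
  apply Finset.sum_nonneg
  intro T _
  split_ifs with h
  · refine mul_nonneg (mul_nonneg ?_ (hXi _)) ?_
    · exact Finset.prod_nonneg fun v _ => by linarith [hr1 v]
    · exact Finset.prod_nonneg fun v _ => eO_nonneg hp0 hpr v (ω v)
  · exact le_refl 0

lemma sum_cyl (S : Finset V) (s : V → Bool) :
    ∑ ω : V → Bool, (if ∀ v ∈ S, ω v = s v then CC G p r Finset.univ ω else 0)
      = CC G p r S s := by
  classical
  have expand : ∀ ω : V → Bool,
      (if ∀ v ∈ S, ω v = s v then CC G p r Finset.univ ω else 0)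
      = ∑ A ∈ (Finset.univ : Finset V).powerset,
          (if ind G A then
            (if ∀ v ∈ S, ω v = s v then
              (∏ v ∈ A, eI p r v (ω v)) * ∏ v ∈ Finset.univ \ A, eO p r v (ω v)
             else 0)
          else 0) := by
    intro ω
    by_cases h : ∀ v ∈ S, ω v = s v
    · rw [if_pos h]
      unfold CC
      refine Finset.sum_congr rfl fun A _ => ?_
      by_cases hA : ind G A
      · rw [if_pos hA, if_pos hA, if_pos h]
      · rw [if_neg hA, if_neg hA]
    · rw [if_neg h]
      symm
      apply Finset.sum_eq_zero
      intro A _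
      by_cases hA : ind G A
      · rw [if_pos hA, if_neg h]
      · rw [if_neg hA]
  rw [Finset.sum_congr rfl (fun ω _ => expand ω), Finset.sum_comm]
  have inner : ∀ A ∈ (Finset.univ : Finset V).powerset,
      (∑ ω : V → Bool,
        (if ind G A then
          (if ∀ v ∈ S, ω v = s v then
            (∏ v ∈ A, eI p r v (ω v)) * ∏ v ∈ Finset.univ \ A, eO p r v (ω v)
           else 0)
         else 0))
      = if ind G A ∧ A ⊆ S then (∏ v ∈ A, eI p r v (s v)) * ∏ v ∈ S \ A, eO p r v (s v)
        else 0 := by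
    intro A _
    by_cases hA : ind G A
    case neg => simp [hA]
    simp only [if_pos hA]
    have hRHS : (if ind G A ∧ A ⊆ S then
          (∏ v ∈ A, eI p r v (s v)) * ∏ v ∈ S \ A, eO p r v (s v) else 0)
        = (if A ⊆ S then (∏ v ∈ A, eI p r v (s v)) * ∏ v ∈ S \ A, eO p r v (s v) else 0) := by
      by_cases hAS : A ⊆ S
      · rw [if_pos ⟨hA, hAS⟩, if_pos hAS]
      · rw [if_neg (fun hc => hAS hc.2), if_neg hAS]
    rw [hRHS]
    set f : V → Bool → ℝ := fun v b => if v ∈ A then eI p r v b else eO p r v b with hf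
    set g : V → Bool → ℝ :=
      fun v b => if v ∈ S then (if b = s v then f v b else 0) else f v b with hg
    have claim0 : ∀ ω : V → Bool,
        (if ∀ v ∈ S, ω v = s v then
          (∏ v ∈ A, eI p r v (ω v)) * ∏ v ∈ Finset.univ \ A, eO p r v (ω v) else 0)
        = ∏ v, g v (ω v) := by
      intro ω
      have hprod : (∏ v ∈ A, eI p r v (ω v)) * ∏ v ∈ Finset.univ \ A, eO p r v (ω v)
          = ∏ v, f v (ω v) := by
        have h1 : ∏ v ∈ A, eI p r v (ω v) = ∏ v ∈ A, f v (ω v) :=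
          Finset.prod_congr rfl fun v hv => by simp only [hf]; rw [if_pos hv]
        have h2 : ∏ v ∈ Finset.univ \ A, eO p r v (ω v)
            = ∏ v ∈ Finset.univ \ A, f v (ω v) :=
          Finset.prod_congr rfl fun v hv => by
            simp only [hf]; rw [if_neg (Finset.mem_sdiff.mp hv).2]
        rw [h1, h2, mul_comm, Finset.prod_sdiff (Finset.subset_univ A)]
      by_cases hc : ∀ v ∈ S, ω v = s v
      · rw [if_pos hc, hprod]
        refine Finset.prod_congr rfl fun v _ => ?_
        simp only [hg]
        by_cases hvS : v ∈ S
        · rw [if_pos hvS, if_pos (hc v hvS)]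
        · rw [if_neg hvS]
      · rw [if_neg hc]
        push_neg at hc
        obtain ⟨v0, hv0S, hv0⟩ := hc
        symm
        apply Finset.prod_eq_zero (Finset.mem_univ v0)
        simp only [hg]
        rw [if_pos hv0S, if_neg hv0]
    rw [Finset.sum_congr rfl (fun ω _ => claim0 ω)]
    have claim2 : ∑ ω : V → Bool, ∏ v, g v (ω v) = ∏ v, (g v true + g v false) := by
      have h := Finset.prod_univ_sum (fun _ : V => (Finset.univ : Finset Bool))
        (fun v b => g v b)
      rw [Fintype.piFinset_univ] at h
      rw [← h]
      refine Finset.prod_congr rfl fun v _ => ?_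
      exact Fintype.sum_bool _
    rw [claim2]
    have hv1 : ∀ v, g v true + g v false
        = if v ∈ S then f v (s v) else (if v ∈ A then 0 else 1) := by
      intro v
      simp only [hg]
      by_cases hvS : v ∈ S
      · rw [if_pos hvS, if_pos hvS, if_pos hvS]
        cases hsv : s v
        · rw [if_neg (by simp [hsv]), if_pos (by simp [hsv])]
          ring
        · rw [if_pos (by simp [hsv]), if_neg (by simp [hsv])]
          ring
      · rw [if_neg hvS, if_neg hvS, if_neg hvS]
        simp only [hf]
        by_cases hvA : v ∈ A
        · rw [if_pos hvA, if_pos hvA, if_pos hvA]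
          unfold eI; simp
        · rw [if_neg hvA, if_neg hvA, if_neg hvA]
          unfold eO; simp
    rw [Finset.prod_congr rfl (fun v _ => hv1 v), ← Finset.prod_sdiff (Finset.subset_univ S)]
    have hS : ∏ v ∈ S, (if v ∈ S then f v (s v) else (if v ∈ A then 0 else 1))
        = ∏ v ∈ S, f v (s v) := Finset.prod_congr rfl fun v hv => if_pos hv
    by_cases hAS : A ⊆ S
    · have hout : ∀ v ∈ Finset.univ \ S,
          (if v ∈ S then f v (s v) else (if v ∈ A then 0 else 1)) = 1 := by
        intro v hv
        rw [if_neg (Finset.mem_sdiff.mp hv).2,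
          if_neg (fun hvA => (Finset.mem_sdiff.mp hv).2 (hAS hvA))]
      rw [Finset.prod_congr rfl hout, Finset.prod_const_one, one_mul, hS, if_pos hAS,
        ← Finset.prod_sdiff hAS, mul_comm]
      congr 1
      · exact Finset.prod_congr rfl fun v hv => by simp only [hf]; rw [if_pos hv]
      · exact Finset.prod_congr rfl fun v hv => by
          simp only [hf]; rw [if_neg (Finset.mem_sdiff.mp hv).2]
    · rw [if_neg hAS]
      obtain ⟨a, haA, haS⟩ := Finset.not_subset.mp hAS
      have hz : (if a ∈ S then f a (s a) else (if a ∈ A then 0 else 1)) = 0 := by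
        rw [if_neg haS, if_pos haA]
      rw [Finset.prod_eq_zero (Finset.mem_sdiff.mpr ⟨Finset.mem_univ a, haS⟩) hz, zero_mul]
  rw [Finset.sum_congr rfl inner]
  have hsub : ∑ A ∈ (Finset.univ : Finset V).powerset,
      (if ind G A ∧ A ⊆ S then (∏ v ∈ A, eI p r v (s v)) * ∏ v ∈ S \ A, eO p r v (s v) else 0)
      = ∑ A ∈ S.powerset,
      (if ind G A ∧ A ⊆ S then (∏ v ∈ A, eI p r v (s v)) * ∏ v ∈ S \ A, eO p r v (s v) else 0) := by
    refine (Finset.sum_subset (Finset.powerset_mono.mpr (Finset.subset_univ S)) ?_).symm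
    intro A _ hA
    rw [if_neg (fun hc => hA (Finset.mem_powerset.mpr hc.2))]
  rw [hsub]
  unfold CC
  refine Finset.sum_congr rfl fun A hA => ?_
  rw [Finset.mem_powerset] at hA
  by_cases hind : ind G A
  · rw [if_pos ⟨hind, hA⟩, if_pos hind]
  · rw [if_neg (fun hc => hind hc.1), if_neg hind]

lemma CC_nonneg (hp0 : ∀ v, 0 ≤ p v) (hpr : ∀ v, p v ≤ r v) (hr1 : ∀ v, r v ≤ 1)
    (hXi : ∀ U, 0 ≤ Xi G U r) (S : Finset V) (s : V → Bool) : 0 ≤ CC G p r S s := by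
  rw [← sum_cyl G S s]
  refine Finset.sum_nonneg fun ω _ => ?_
  split_ifs
  · exact w_nonneg G hp0 hpr hr1 hXi ω
  · exact le_rfl

lemma CC_empty (s : V → Bool) : CC G p r ∅ s = 1 := by
  unfold CC
  rw [Finset.powerset_empty, Finset.sum_singleton, if_pos (ind_empty G)]
  simp

lemma CC_true_single (hp0 : ∀ v, 0 ≤ p v) (hpr : ∀ v, p v ≤ r v) (v : V) :
    CC G p r {v} (fun _ => true) = p v := by
  unfold CC
  rw [show ({v} : Finset V).powerset = {∅, {v}} from rfl, Finset.sum_pair (Ne.symm (Finset.singleton_ne_empty v)),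
    if_pos (ind_empty G), if_pos (ind_singleton G v)]
  simp only [Finset.prod_empty, Finset.sdiff_empty, Finset.prod_singleton, one_mul,
    Finset.sdiff_self, Finset.prod_empty, mul_one]
  unfold eI eO
  simp only [if_true]
  have := bet_mul hp0 hpr v
  nlinarith [this]

lemma CC_congr (S : Finset V) {s s' : V → Bool} (h : ∀ v ∈ S, s v = s' v) :
    CC G p r S s = CC G p r S s' := by
  unfold CC
  refine Finset.sum_congr rfl fun A hA => ?_
  rw [Finset.mem_powerset] at hA
  by_cases hind : ind G A
  · rw [if_pos hind, if_pos hind]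
    congr 1
    · exact Finset.prod_congr rfl fun v hv => by rw [h v (hA hv)]
    · exact Finset.prod_congr rfl fun v hv => by rw [h v (Finset.mem_sdiff.mp hv).1]
  · rw [if_neg hind, if_neg hind]

lemma CC_union {S₁ S₂ : Finset V} (hd : Disjoint S₁ S₂)
    (hna : ∀ u ∈ S₁, ∀ w ∈ S₂, ¬ G.Adj u w) (s : V → Bool) :
    CC G p r (S₁ ∪ S₂) s = CC G p r S₁ s * CC G p r S₂ s := by
  classical
  unfold CC
  rw [Finset.sum_mul_sum, ← Finset.sum_product']
  refine Finset.sum_nbij' (fun A => (A ∩ S₁, A ∩ S₂)) (fun z => z.1 ∪ z.2) ?_ ?_ ?_ ?_ ?_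
  · intro A hA
    simp only [Finset.mem_product, Finset.mem_powerset]
    exact ⟨Finset.inter_subset_right, Finset.inter_subset_right⟩
  · rintro ⟨A₁, A₂⟩ hz
    simp only [Finset.mem_product, Finset.mem_powerset] at hz ⊢
    exact Finset.union_subset_union hz.1 hz.2
  · intro A hA
    rw [Finset.mem_powerset] at hA
    simp only
    ext x
    simp only [Finset.mem_union, Finset.mem_inter]
    constructor
    · rintro (⟨h1, _⟩ | ⟨h1, _⟩) <;> exact h1
    · intro hx
      rcases Finset.mem_union.mp (hA hx) with h | h
      · exact Or.inl ⟨hx, h⟩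
      · exact Or.inr ⟨hx, h⟩
  · rintro ⟨A₁, A₂⟩ hz
    simp only [Finset.mem_product, Finset.mem_powerset] at hz
    obtain ⟨h1, h2⟩ := hz
    have e1 : (A₁ ∪ A₂) ∩ S₁ = A₁ := by
      ext x
      simp only [Finset.mem_inter, Finset.mem_union]
      constructor
      · rintro ⟨hx | hx, hxS⟩
        · exact hx
        · exact absurd hxS (Finset.disjoint_right.mp hd (h2 hx))
      · intro hx; exact ⟨Or.inl hx, h1 hx⟩
    have e2 : (A₁ ∪ A₂) ∩ S₂ = A₂ := by
      ext x
      simp only [Finset.mem_inter, Finset.mem_union]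
      constructor
      · rintro ⟨hx | hx, hxS⟩
        · exact absurd hxS (Finset.disjoint_left.mp hd (h1 hx))
        · exact hx
      · intro hx; exact ⟨Or.inr hx, h2 hx⟩
    simp only [e1, e2]
  · intro A hA
    rw [Finset.mem_powerset] at hA
    have hdA : Disjoint (A ∩ S₁) (A ∩ S₂) :=
      Finset.disjoint_left.mpr fun x hx1 hx2 =>
        Finset.disjoint_left.mp hd (Finset.mem_inter.mp hx1).2 (Finset.mem_inter.mp hx2).2
    have hAeq : A = (A ∩ S₁) ∪ (A ∩ S₂) := by
      ext x
      simp only [Finset.mem_union, Finset.mem_inter]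
      constructor
      · intro hx
        rcases Finset.mem_union.mp (hA hx) with h | h
        · exact Or.inl ⟨hx, h⟩
        · exact Or.inr ⟨hx, h⟩
      · rintro (⟨h1, _⟩ | ⟨h1, _⟩) <;> exact h1
    have hind_iff : ind G A ↔ ind G (A ∩ S₁) ∧ ind G (A ∩ S₂) := by
      constructor
      · intro h
        exact ⟨ind_subset Finset.inter_subset_left h, ind_subset Finset.inter_subset_left h⟩
      · rintro ⟨hi1, hi2⟩ u hu w hw
        rcases Finset.mem_union.mp (hAeq ▸ hu : u ∈ (A ∩ S₁) ∪ (A ∩ S₂)) with hu' | hu' <;>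
          rcases Finset.mem_union.mp (hAeq ▸ hw : w ∈ (A ∩ S₁) ∪ (A ∩ S₂)) with hw' | hw'
        · exact hi1 u hu' w hw'
        · exact hna u (Finset.mem_inter.mp hu').2 w (Finset.mem_inter.mp hw').2
        · exact fun hadj =>
            hna w (Finset.mem_inter.mp hw').2 u (Finset.mem_inter.mp hu').2 hadj.symm
        · exact hi2 u hu' w hw'
    have hsd : (S₁ ∪ S₂) \ A = (S₁ \ (A ∩ S₁)) ∪ (S₂ \ (A ∩ S₂)) := by
      ext x
      simp only [Finset.mem_sdiff, Finset.mem_union, Finset.mem_inter]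
      constructor
      · rintro ⟨hx | hx, hxA⟩
        · exact Or.inl ⟨hx, fun hc => hxA hc.1⟩
        · exact Or.inr ⟨hx, fun hc => hxA hc.1⟩
      · rintro (⟨hx, hxA⟩ | ⟨hx, hxA⟩)
        · exact ⟨Or.inl hx, fun hc => hxA ⟨hc, hx⟩⟩
        · exact ⟨Or.inr hx, fun hc => hxA ⟨hc, hx⟩⟩
    have hsd_disj : Disjoint (S₁ \ (A ∩ S₁)) (S₂ \ (A ∩ S₂)) :=
      Finset.disjoint_left.mpr fun x hx1 hx2 =>
        Finset.disjoint_left.mp hd (Finset.mem_sdiff.mp hx1).1 (Finset.mem_sdiff.mp hx2).1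
    by_cases hi : ind G A
    · rw [if_pos hi, if_pos ((hind_iff.mp hi).1), if_pos ((hind_iff.mp hi).2)]
      rw [hsd, Finset.prod_union hsd_disj,
        show (∏ x ∈ A, eI p r x (s x))
            = (∏ x ∈ A ∩ S₁, eI p r x (s x)) * ∏ x ∈ A ∩ S₂, eI p r x (s x) from by
          rw [← Finset.prod_union hdA, ← hAeq]]
      ring
    · have : ¬ (ind G (A ∩ S₁) ∧ ind G (A ∩ S₂)) := fun hc => hi (hind_iff.mpr hc)
      rw [if_neg hi]
      rcases not_and_or.mp this with h | h
      · rw [if_neg h, zero_mul]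
      · rw [if_neg h, mul_zero]

lemma CC_univ_true : CC G p r Finset.univ (fun _ => true)
    = (∏ v, bet p r v) * Xi G Finset.univ r := by
  unfold CC
  rw [Xi_def, Finset.mul_sum]
  refine Finset.sum_congr rfl fun A _ => ?_
  by_cases hind : ind G A
  · rw [if_pos hind, if_pos hind]
    have h1 : ∏ v ∈ A, eI p r v true = (∏ v ∈ A, bet p r v) * ∏ v ∈ A, -(1 - r v) := by
      rw [← Finset.prod_mul_distrib]
      refine Finset.prod_congr rfl fun v _ => ?_
      unfold eI
      simp only [if_true]
      ring
    have h2 : ∏ v ∈ Finset.univ \ A, eO p r v true = ∏ v ∈ Finset.univ \ A, bet p r v :=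
      Finset.prod_congr rfl fun v _ => by unfold eO; simp
    rw [h1, h2,
      show (∏ v, bet p r v) = (∏ v ∈ Finset.univ \ A, bet p r v) * ∏ v ∈ A, bet p r v from
        (Finset.prod_sdiff (Finset.subset_univ A)).symm]
    ring
  · rw [if_neg hind, if_neg hind, mul_zero]

lemma measurableSet_all (E : Set (V → Bool)) : MeasurableSet E := by
  have h1 : E = ⋃ ω ∈ E, {ω} := by simp
  rw [h1]
  refine MeasurableSet.biUnion E.to_countable (fun ω _ => ?_)
  have h2 : ({ω} : Set (V → Bool)) = Set.pi Set.univ (fun v => {ω v}) := by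
    ext x; simp [funext_iff]
  rw [h2]
  exact MeasurableSet.pi Set.univ.to_countable (fun i _ => MeasurableSet.singleton _)

end Props

end Stmt9

/-- outside the interior Shearer set there is a BRF in the strong
dependency class giving probability zero to the all-ones configuration. -/
theorem stmt9 {V : Type*} [Fintype V] (G : SimpleGraph V) (p : V → ℝ)
    (hp : ∀ v, p v ∈ Set.Icc (0:ℝ) 1)
    (hns : ∃ W : Finset V, Xi G W p ≤ 0) :
    ∃ μ : Measure (V → Bool), StrongDep G p μ ∧
      μ {ω | ∀ v, ω v = true} = 0 := by
  classical
  have hp0 : ∀ v, 0 ≤ p v := fun v => (hp v).1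
  obtain ⟨r, hpr, hr1, hXi, hXiuniv⟩ :=
    Stmt9.exists_crit G p hp0 (fun v => (hp v).2) hns
  set μ : Measure (V → Bool) :=
    ∑ ω ∈ (Finset.univ : Finset (V → Bool)),
      (ENNReal.ofReal (Stmt9.CC G p r Finset.univ ω)) • Measure.dirac ω with hμ
  have hwnn := Stmt9.w_nonneg G hp0 hpr hr1 hXi
  have hmeas : ∀ E : Set (V → Bool), MeasurableSet E := Stmt9.measurableSet_all
  have happ : ∀ E : Set (V → Bool),
      μ E = ∑ ω : V → Bool,
        (if ω ∈ E then ENNReal.ofReal (Stmt9.CC G p r Finset.univ ω) else 0) := by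
    intro E
    rw [hμ, MeasureTheory.Measure.finset_sum_apply]
    refine Finset.sum_congr rfl fun ω _ => ?_
    rw [MeasureTheory.Measure.smul_apply, MeasureTheory.Measure.dirac_apply' ω (hmeas E),
      Set.indicator_apply]
    by_cases h : ω ∈ E
    · rw [if_pos h, if_pos h]; simp
    · rw [if_neg h, if_neg h]; simp
  have hcyl : ∀ (S : Finset V) (s : V → Bool),
      μ (cylEvt S s) = ENNReal.ofReal (Stmt9.CC G p r S s) := by
    intro S s
    rw [happ, ← Stmt9.sum_cyl G S s,
      ENNReal.ofReal_sum_of_nonneg (fun ω _ => by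
        split_ifs
        · exact hwnn ω
        · exact le_rfl)]
    refine Finset.sum_congr rfl fun ω _ => ?_
    by_cases h : ∀ v ∈ S, ω v = s v
    · rw [if_pos (show ω ∈ cylEvt S s from h), if_pos h]
    · rw [if_neg (show ¬ ω ∈ cylEvt S s from h), if_neg h, ENNReal.ofReal_zero]
  have hCCnn : ∀ (S : Finset V) (s : V → Bool), 0 ≤ Stmt9.CC G p r S s :=
    fun S s => Stmt9.CC_nonneg G hp0 hpr hr1 hXi S s
  have hprob : IsProbabilityMeasure μ := by
    constructor
    have huniv : (Set.univ : Set (V → Bool)) = cylEvt (∅ : Finset V) (fun _ => true) := by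
      ext ω; simp [cylEvt]
    rw [huniv, hcyl, Stmt9.CC_empty, ENNReal.ofReal_one]
  refine ⟨μ, ⟨hprob, ?_, ?_⟩, ?_⟩
  · intro v
    have hset : {ω : V → Bool | ω v = true} = cylEvt {v} (fun _ => true) := by
      ext ω; simp [cylEvt]
    rw [hset, hcyl, Stmt9.CC_true_single G hp0 hpr v, ENNReal.toReal_ofReal (hp0 v)]
  · intro S₁ S₂ hSS s₁ s₂
    have hdisj : Disjoint S₁ S₂ :=
      Finset.disjoint_left.mpr fun a h1 h2 => (hSS a h1 a h2).1 rfl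
    have hna : ∀ u ∈ S₁, ∀ w ∈ S₂, ¬ G.Adj u w := fun u hu w hw => (hSS u hu w hw).2
    set sm : V → Bool := fun v => if v ∈ S₁ then s₁ v else s₂ v with hsm
    have hint : cylEvt S₁ s₁ ∩ cylEvt S₂ s₂ = cylEvt (S₁ ∪ S₂) sm := by
      ext ω
      simp only [cylEvt, Set.mem_inter_iff, Set.mem_setOf_eq, Finset.mem_union, hsm]
      constructor
      · rintro ⟨h1, h2⟩ v hv
        by_cases hv1 : v ∈ S₁
        · rw [if_pos hv1]; exact h1 v hv1
        · rw [if_neg hv1]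
          rcases hv with hv | hv
          · exact absurd hv hv1
          · exact h2 v hv
      · intro h
        constructor
        · intro v hv
          have := h v (Or.inl hv)
          rwa [if_pos hv] at this
        · intro v hv
          have := h v (Or.inr hv)
          rwa [if_neg (fun hc => Finset.disjoint_left.mp hdisj hc hv)] at this
    have hm1 : Stmt9.CC G p r S₁ sm = Stmt9.CC G p r S₁ s₁ :=
      Stmt9.CC_congr G S₁ (fun v hv => by simp only [hsm]; rw [if_pos hv])
    have hm2 : Stmt9.CC G p r S₂ sm = Stmt9.CC G p r S₂ s₂ :=
      Stmt9.CC_congr G S₂ (fun v hv => by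
        simp only [hsm]
        rw [if_neg (fun hc => Finset.disjoint_left.mp hdisj hc hv)])
    rw [hint, hcyl, hcyl, hcyl, Stmt9.CC_union G hdisj hna, hm1, hm2,
      ENNReal.ofReal_mul (hCCnn S₁ s₁)]
  · have hset : {ω : V → Bool | ∀ v, ω v = true}
        = cylEvt (Finset.univ : Finset V) (fun _ => true) := by
      ext ω; simp [cylEvt]
    rw [hset, hcyl, Stmt9.CC_univ_true, hXiuniv, mul_zero, ENNReal.ofReal_zero]
end

section
/- Let G = (V,E) be a finite simple graph, p ∈ [0,1]^V in the Shearer set of G, W ⊆ V and v ∈ V ∖ W with Ξ_{G[W]}(p) > 0. If the pair (W,v) is escaping, i.e. there exists w ∈ N(v) ∖ W, then for every such escape w one has q_w ≤ Θ_{W,v}(p) := Ξ_{G[W∪{v}]}(p) / Ξ_{G[W]}(p), where q_w := 1 − p_w. -/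
open MeasureTheory Finset
open scoped Classical

/-!
Deleting a vertex `u` from `S ∪ {u}` gives the recursion
`Ξ(S ∪ {u}) = Ξ(S) - q_u Ξ(S ∖ N(u))`. In the Shearer set every `Ξ` is nonnegative, so the
recursion shows that `Ξ` is antitone in the vertex set, and, applied to the escape `w` and
`S = W ∪ {v}`, it gives `q_w Ξ(W) ≤ q_w Ξ(S ∖ N(w)) ≤ Ξ(S)`, because `S ∖ N(w) ⊆ W`.
-/

namespace Xi

variable {V : Type*} (G : SimpleGraph V) (p : V → ℝ)

noncomputable def term (T : Finset V) : ℝ :=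
  if ∀ u ∈ T, ∀ w ∈ T, ¬ G.Adj u w then ∏ v ∈ T, -(1 - p v) else 0

theorem eq_sum_term (W : Finset V) : Xi G W p = ∑ T ∈ W.powerset, term G p T := rfl

variable {G} in
theorem indep_insert_iff [DecidableEq V] {u : V} {T : Finset V} :
    (∀ a ∈ insert u T, ∀ b ∈ insert u T, ¬ G.Adj a b) ↔
      (∀ a ∈ T, ∀ b ∈ T, ¬ G.Adj a b) ∧ ∀ x ∈ T, ¬ G.Adj u x := by
  simp only [mem_insert, forall_eq_or_imp, G.irrefl, not_false_eq_true, true_and]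
  exact ⟨fun h => ⟨fun a ha => (h.2 a ha).2, h.1⟩,
    fun h => ⟨h.2, fun a ha => ⟨fun hau => h.2 a ha hau.symm, h.1 a ha⟩⟩⟩

theorem term_insert [DecidableEq V] {u : V} {T : Finset V} (hu : u ∉ T) :
    term G p (insert u T) = if ∀ x ∈ T, ¬ G.Adj u x then -(1 - p u) * term G p T else 0 := by
  unfold term
  rw [if_congr indep_insert_iff rfl rfl, prod_insert hu]
  split_ifs <;> simp_all

/-- The independent sets through `u` are `u` together with an independent subset of `S`
avoiding `N(u)`. -/
theorem insert_eq [DecidableEq V] {u : V} {S : Finset V} (hu : u ∉ S) :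
    Xi G (insert u S) p = Xi G S p - (1 - p u) * Xi G (S.filter (¬ G.Adj u ·)) p := by
  have hpow : S.powerset.filter (· ⊆ S.filter (¬ G.Adj u ·)) =
      (S.filter (¬ G.Adj u ·)).powerset := by
    ext T
    simp only [mem_filter, mem_powerset, subset_iff]
    exact ⟨fun h x hx => h.2 hx, fun h => ⟨fun x hx => (h hx).1, h⟩⟩
  have hcontract : ∑ T ∈ S.powerset, term G p (insert u T) =
      ∑ T ∈ S.powerset, if T ⊆ S.filter (¬ G.Adj u ·) then -(1 - p u) * term G p T else 0 := by
    refine sum_congr rfl fun T hT => ?_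
    rw [term_insert G p (fun h => hu (mem_powerset.1 hT h))]
    congr 1
    simp only [subset_iff, mem_filter]
    exact propext ⟨fun h x hx => ⟨mem_powerset.1 hT hx, h x hx⟩, fun h x hx => (h hx).2⟩
  rw [eq_sum_term, sum_powerset_insert hu, hcontract, ← sum_filter, hpow, ← mul_sum]
  simp only [eq_sum_term]
  ring

variable {G p}

theorem insert_le [DecidableEq V] (hp : ∀ v, p v ≤ 1) (hShearer : ∀ W : Finset V, 0 ≤ Xi G W p)
    (u : V) (S : Finset V) : Xi G (insert u S) p ≤ Xi G S p := by
  by_cases hu : u ∈ S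
  · rw [insert_eq_of_mem hu]
  · rw [insert_eq G p hu, sub_le_self_iff]
    exact mul_nonneg (sub_nonneg.2 (hp u)) (hShearer _)

theorem le_of_subset [DecidableEq V] (hp : ∀ v, p v ≤ 1)
    (hShearer : ∀ W : Finset V, 0 ≤ Xi G W p) {A B : Finset V} (hAB : A ⊆ B) :
    Xi G B p ≤ Xi G A p := by
  rw [← sdiff_union_of_subset hAB]
  induction B \ A using Finset.induction_on with
  | empty => rw [empty_union]
  | insert a C _ ih => exact (insert_union a C A ▸ insert_le hp hShearer a _).trans ih

theorem mul_filter_le [DecidableEq V] {u : V} {S : Finset V} (hu : u ∉ S)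
    (hins : 0 ≤ Xi G (insert u S) p) :
    (1 - p u) * Xi G (S.filter (¬ G.Adj u ·)) p ≤ Xi G S p := by
  rw [insert_eq G p hu] at hins
  linarith

end Xi

theorem stmt12_general {V : Type*} [DecidableEq V] (G : SimpleGraph V)
    (p : V → ℝ) (hp : ∀ v, p v ∈ Set.Icc (0:ℝ) 1)
    (hShearer : ∀ W : Finset V, 0 ≤ Xi G W p)
    (W : Finset V) (v : V) (hW : 0 < Xi G W p)
    (w : V) (hadj : G.Adj v w) (hwW : w ∉ W) :
    1 - p w ≤ Xi G (insert v W) p / Xi G W p := by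
  have hwS : w ∉ insert v W := by simp [hadj.ne.symm, hwW]
  have hfilter : (insert v W).filter (¬ G.Adj w ·) ⊆ W := by
    intro x hx
    obtain ⟨hx, hwx⟩ := mem_filter.1 hx
    exact (mem_insert.1 hx).resolve_left fun hxv => hwx (hxv ▸ hadj.symm)
  rw [le_div_iff₀ hW]
  calc (1 - p w) * Xi G W p
      ≤ (1 - p w) * Xi G ((insert v W).filter (¬ G.Adj w ·)) p :=
        mul_le_mul_of_nonneg_left (Xi.le_of_subset (fun u => (hp u).2) hShearer hfilter)
          (sub_nonneg.2 (hp w).2)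
    _ ≤ Xi G (insert v W) p := Xi.mul_filter_le hwS (hShearer _)

/-- escaping one-vertex open extension probabilities are at
least q_w for every escape w. -/
theorem stmt12 {V : Type*} [Fintype V] [DecidableEq V] (G : SimpleGraph V)
    (p : V → ℝ) (hp : ∀ v, p v ∈ Set.Icc (0:ℝ) 1)
    (hShearer : ∀ W : Finset V, 0 ≤ Xi G W p)
    (W : Finset V) (v : V) (hv : v ∉ W) (hW : 0 < Xi G W p)
    (w : V) (hadj : G.Adj v w) (hwW : w ∉ W) :
    1 - p w ≤ Xi G (insert v W) p / Xi G W p :=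
  stmt12_general G p hp hShearer W v hW w hadj hwW
end
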